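/- arXiv:math/9910067 — 5 statements merged into one kernel-verified Lean document; each statement's English description precedes it below -/
import Mathlib

section
/- Let f, g : ℝ → ℝ be continuous. Suppose f has t real zeros ρ₁ < ... < ρ_t, and g has a zero with a sign change in each open interval (ρ_i, ρ_{i+1}) and no other zero in [ρ₁, ρ_t]. Then for any nonzero reals α, β, the function αf + βg has at least t - 1 real zeros. -/
lemma ivt_mul_neg {h : ℝ → ℝ} (hc : Continuous h) {a b : ℝ} (hab : a ≤ b)
    (hs : h a * h b < 0) : ∃ x ∈ Set.Ioo a b, h x = 0 := by
  rcases mul_neg_iff.mp hs with ⟨ha, hb⟩ | ⟨ha, hb⟩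
  · obtain ⟨x, hx, hx0⟩ := intermediate_value_Ioo' hab hc.continuousOn
      (show (0:ℝ) ∈ Set.Ioo (h b) (h a) from ⟨hb, ha⟩)
    exact ⟨x, hx, hx0⟩
  · obtain ⟨x, hx, hx0⟩ := intermediate_value_Ioo hab hc.continuousOn
      (show (0:ℝ) ∈ Set.Ioo (h a) (h b) from ⟨ha, hb⟩)
    exact ⟨x, hx, hx0⟩

theorem stmt_6 (f g : ℝ → ℝ) (hf : Continuous f) (hg : Continuous g)
    (t : ℕ) (ρ : Fin t → ℝ) (hmono : StrictMono ρ)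
    (hfz : ∀ i : Fin t, f (ρ i) = 0)
    (hgz : ∀ i : Fin t, g (ρ i) ≠ 0)
    (htrans : ∀ i : ℕ, ∀ hi : i + 1 < t,
      ∃ c ∈ Set.Ioo (ρ ⟨i, Nat.lt_of_succ_lt hi⟩) (ρ ⟨i + 1, hi⟩),
        g c = 0 ∧
        (∀ x ∈ Set.Icc (ρ ⟨i, Nat.lt_of_succ_lt hi⟩) (ρ ⟨i + 1, hi⟩), g x = 0 → x = c) ∧
        g (ρ ⟨i, Nat.lt_of_succ_lt hi⟩) * g (ρ ⟨i + 1, hi⟩) < 0) :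
    ∀ α β : ℝ, α ≠ 0 → β ≠ 0 →
      ∃ S : Finset ℝ, t - 1 ≤ S.card ∧ ∀ x ∈ S, α * f x + β * g x = 0 := by
  intro α β hα hβ
  set h : ℝ → ℝ := fun x => α * f x + β * g x with hh
  have hch : Continuous h := by continuity
  have key : ∀ i : Fin (t - 1),
      ∃ x ∈ Set.Ioo (ρ ⟨i.1, by omega⟩) (ρ ⟨i.1 + 1, by omega⟩), h x = 0 := by
    intro i
    have hi : i.1 + 1 < t := by omega
    obtain ⟨c, _, _, _, hsgn⟩ := htrans i.1 hi
    apply ivt_mul_neg hch (le_of_lt (hmono (by simp [Fin.lt_def])))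
    have e1 : h (ρ ⟨i.1, by omega⟩) = β * g (ρ ⟨i.1, by omega⟩) := by
      simp [hh, hfz]
    have e2 : h (ρ ⟨i.1 + 1, hi⟩) = β * g (ρ ⟨i.1 + 1, hi⟩) := by
      simp [hh, hfz]
    rw [e1, e2]
    have : β * g (ρ ⟨i.1, by omega⟩) * (β * g (ρ ⟨i.1 + 1, hi⟩))
        = β ^ 2 * (g (ρ ⟨i.1, Nat.lt_of_succ_lt hi⟩) * g (ρ ⟨i.1 + 1, hi⟩)) := by ring
    rw [this]
    exact mul_neg_of_pos_of_neg (by positivity) hsgn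
  choose c hc hc0 using key
  have hcmono : StrictMono c := by
    intro i j hij
    calc c i < ρ ⟨i.1 + 1, by omega⟩ := (hc i).2
    _ ≤ ρ ⟨j.1, by omega⟩ := by
        rcases eq_or_lt_of_le (show i.1 + 1 ≤ j.1 from hij) with h' | h'
        · exact le_of_eq (congrArg ρ (Fin.ext h'))
        · exact le_of_lt (hmono (by simpa [Fin.lt_def] using h'))
    _ < c j := (hc j).1
  refine ⟨Finset.univ.image c, ?_, ?_⟩
  · rw [Finset.card_image_of_injective _ hcmono.injective]
    simp
  · intro x hx
    simp only [Finset.mem_image, Finset.mem_univ, true_and] at hx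
    obtain ⟨i, rfl⟩ := hx
    exact hc0 i
end

section
/- If a ∈ ℤ, b is a positive even integer, and 2 + a(b-1) < 0, then r_{a,b}(X) = 1 + aX + ... + aX^{b-1} + X^b is a reciprocal Salem polynomial: it is monic, reciprocal, and has exactly one root of modulus > 1, this root being simple and real, with all other roots on the unit circle except one root inside. -/
/-!
Write `b = 2m`. Since `r = r_{a,b}` is self-reciprocal of degree `2m`, its roots are closed under
`z ↦ z⁻¹` and `θ ↦ e^{-imθ} r(e^{iθ})` is a continuous real function. At `θ = πk/m` with
`0 < k < 2m`, `e^{iθ}` is a `2m`-th root of unity other than `1`, where `r` takes the value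
`2 - a`; so this function equals `(-1)^k (2 - a)` there and has a zero in each of the `2m - 2`
intervals `(πk/m, π(k+1)/m)`, `0 < k < 2m - 1`. As `r(1) = 2 + a(b - 1) < 0`, `r` also has a real
root `λ > 1`, hence the root `λ⁻¹` inside the unit disc. These are `2m` distinct roots of a
polynomial of degree `2m`, so they are all of its roots and all are simple.
-/

open Polynomial

/-- `r_{a,b}(X) = 1 + aX + ⋯ + aX^{b-1} + X^b` over `ℤ`. -/
noncomputable def rPoly (a : ℤ) (b : ℕ) : Polynomial ℤ :=
  1 + X ^ b + C a * ∑ i ∈ Finset.Ico 1 b, X ^ i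

open Complex ComplexConjugate Set Filter

lemma Polynomial.coeff_sub_of_reflect_eq {R : Type*} [Semiring R] {p : R[X]} {N i : ℕ}
    (hp : p.reflect N = p) (hi : i ≤ N) : p.coeff (N - i) = p.coeff i := by
  conv_rhs => rw [← hp, coeff_reflect, revAt_le hi]

lemma Polynomial.roots_eq_val_of_natDegree_le_card {R : Type*} [CommRing R] [IsDomain R]
    {p : R[X]} (hp : p ≠ 0) {s : Finset R} (hs : ∀ x ∈ s, p.IsRoot x)
    (hcard : p.natDegree ≤ s.card) : p.roots = s.val := by
  have hle : s.val ≤ p.roots :=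
    (Multiset.le_iff_subset s.nodup).mpr fun x hx => (mem_roots hp).mpr (hs x hx)
  exact (Multiset.eq_of_le_of_card_le hle ((card_roots' p).trans hcard)).symm

lemma Polynomial.exists_isRoot_gt_of_eval_neg {p : ℝ[X]} (hdeg : 0 < p.degree)
    (hlc : 0 ≤ p.leadingCoeff) {x : ℝ} (hx : p.eval x < 0) : ∃ t, x < t ∧ p.IsRoot t := by
  obtain ⟨y, hy⟩ := ((tendsto_atTop_of_leadingCoeff_nonneg p hdeg hlc).eventually_gt_atTop 0
    |>.and (eventually_gt_atTop x)).exists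
  obtain ⟨t, ht, hroot⟩ :=
    intermediate_value_Ioo hy.2.le p.continuous.continuousOn ⟨hx, hy.1⟩
  exact ⟨t, ht.1, hroot⟩

lemma Polynomial.aeval_inv_mul_pow_of_reflect_eq {R K : Type*} [CommRing R] [Field K]
    [Algebra R K] {p : R[X]} {N : ℕ} (hdeg : p.natDegree ≤ N) (hp : p.reflect N = p)
    {z : K} (hz : z ≠ 0) : aeval z⁻¹ p * z ^ N = aeval z p := by
  let := invertibleOfNonzero hz
  simpa [aeval_def, hp] using eval₂_reflect_mul_pow (algebraMap R K) z N p hdeg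

lemma Polynomial.conj_aeval_div_pow_of_reflect_eq {p : ℝ[X]} {m : ℕ}
    (hdeg : p.natDegree ≤ 2 * m) (hp : p.reflect (2 * m) = p) {z : ℂ} (hz : ‖z‖ = 1) :
    conj (aeval z p / z ^ m) = aeval z p / z ^ m := by
  have hz0 : z ≠ 0 := norm_ne_zero_iff.mp (by simp [hz])
  rw [map_div₀, map_pow, ← aeval_conj, ← inv_eq_conj hz,
    ← aeval_inv_mul_pow_of_reflect_eq hdeg hp hz0, inv_pow]
  field_simp
  ring

lemma exists_mem_Ioo_eq_zero_of_mul_neg {f : ℝ → ℝ} {x y : ℝ} (hxy : x ≤ y)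
    (hf : ContinuousOn f (Icc x y)) (h : f x * f y < 0) : ∃ ξ ∈ Ioo x y, f ξ = 0 := by
  rcases mul_neg_iff.mp h with ⟨hx, hy⟩ | ⟨hx, hy⟩
  · exact intermediate_value_Ioo' hxy hf ⟨hy, hx⟩
  · exact intermediate_value_Ioo hxy hf ⟨hx, hy⟩

lemma injOn_exp_mul_I : InjOn (fun θ : ℝ => exp (θ * I)) (Ico 0 (2 * Real.pi)) :=
  Subtype.val_injective.comp_injOn (Circle.exp_injOn_Ico (by simp))

/-- `e^{-imθ} p(e^{iθ})`, which is real when `p` is self-reciprocal of degree `2m`. -/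
noncomputable def trigForm (p : ℝ[X]) (m : ℕ) (θ : ℝ) : ℝ :=
  (aeval (exp (θ * I)) p / exp (θ * I) ^ m).re

lemma continuous_trigForm (p : ℝ[X]) (m : ℕ) : Continuous (trigForm p m) := by
  unfold trigForm
  fun_prop (disch := exact fun _ => pow_ne_zero _ (exp_ne_zero _))

lemma ofReal_trigForm {p : ℝ[X]} {m : ℕ} (hdeg : p.natDegree ≤ 2 * m)
    (hp : p.reflect (2 * m) = p) (θ : ℝ) :
    (trigForm p m θ : ℂ) = aeval (exp (θ * I)) p / exp (θ * I) ^ m :=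
  conj_eq_iff_re.mp (conj_aeval_div_pow_of_reflect_eq hdeg hp (norm_exp_ofReal_mul_I θ))

section rPoly

variable (a : ℤ) {b m : ℕ}

lemma coeff_rPoly (hb : 0 < b) (n : ℕ) :
    (rPoly a b).coeff n = if n = 0 ∨ n = b then 1 else if n < b then a else 0 := by
  simp only [rPoly, coeff_add, coeff_C_mul, coeff_one, coeff_X_pow, finsetSum_coeff,
    Finset.sum_ite_eq, Finset.mem_Ico]
  split_ifs <;> omega

lemma natDegree_rPoly (hb : 0 < b) : (rPoly a b).natDegree = b := by
  refine natDegree_eq_of_le_of_coeff_ne_zero ?_ (by simp [coeff_rPoly a hb])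
  rw [natDegree_le_iff_coeff_eq_zero]
  intro n hn
  rw [coeff_rPoly a hb]
  split_ifs <;> omega

lemma monic_rPoly (hb : 0 < b) : (rPoly a b).Monic := by
  simp [Monic, leadingCoeff, natDegree_rPoly a hb, coeff_rPoly a hb]

lemma reflect_rPoly (hb : 0 < b) : (rPoly a b).reflect b = rPoly a b := by
  ext n
  rw [coeff_reflect, coeff_rPoly a hb, coeff_rPoly a hb]
  rcases le_or_gt n b with hn | hn
  · rw [revAt_le hn]
    split_ifs <;> omega
  · rw [revAt_eq_self_of_lt hn]

lemma aeval_rPoly {R : Type*} [CommRing R] (z : R) :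
    aeval z (rPoly a b) = 1 + z ^ b + a * ∑ i ∈ Finset.Ico 1 b, z ^ i := by
  simp [rPoly]

lemma aeval_rPoly_one {R : Type*} [CommRing R] (hb : 0 < b) :
    aeval (1 : R) (rPoly a b) = 2 + a * (b - 1) := by
  rw [aeval_rPoly]
  simp [Nat.cast_sub hb]
  ring

lemma aeval_rPoly_of_pow_eq_one {K : Type*} [Field K] (hb : 0 < b) {z : K}
    (hzb : z ^ b = 1) (hz1 : z ≠ 1) : aeval z (rPoly a b) = 2 - a := by
  rw [aeval_rPoly, geom_sum_Ico hz1 hb, hzb, pow_one, ← neg_sub z, neg_div,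
    div_self (sub_ne_zero.mpr hz1)]
  ring

lemma trigForm_rPoly {k : ℕ} (hk : 0 < k) (hkm : k < 2 * m) :
    trigForm ((rPoly a (2 * m)).map (algebraMap ℤ ℝ)) m (Real.pi * k / m) =
      (-1) ^ k * (2 - a) := by
  have hm : 0 < m := by omega
  have hθ : 0 < Real.pi * k / m := by positivity
  have hθ' : Real.pi * k / m < 2 * Real.pi := by
    rw [div_lt_iff₀ (by positivity)]
    have : (k : ℝ) < 2 * m := by exact_mod_cast hkm
    nlinarith [Real.pi_pos]
  set z := exp ((Real.pi * k / m : ℝ) * I) with hz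
  have hzm : z ^ m = (-1) ^ k := by
    rw [← exp_nat_mul, ← exp_pi_mul_I, ← exp_nat_mul]
    congr 1
    have : (m : ℂ) ≠ 0 := by exact_mod_cast hm.ne'
    push_cast
    field_simp
  have hz1 : z ≠ 1 := by
    intro h
    have := injOn_exp_mul_I ⟨hθ.le, hθ'⟩ ⟨le_rfl, by positivity⟩ (by simpa [hz] using h)
    exact hθ.ne' this
  have hzb : z ^ (2 * m) = 1 := by
    rw [pow_mul', hzm, ← pow_mul, Even.neg_one_pow (by simp)]
  rw [trigForm, aeval_map_algebraMap, aeval_rPoly_of_pow_eq_one a (by omega) hzb hz1, hzm]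
  rcases Nat.even_or_odd k with h | h <;> simp [h.neg_one_pow, div_neg]

lemma exists_root_gt_one_rPoly (hb : 0 < b) (ha : 2 + a * (b - 1 : ℤ) < 0) :
    ∃ t : ℝ, 1 < t ∧ aeval t (rPoly a b) = 0 := by
  have hq := (monic_rPoly a hb).map (algebraMap ℤ ℝ)
  have hdeg : 0 < ((rPoly a b).map (algebraMap ℤ ℝ)).degree := by
    rw [← natDegree_pos_iff_degree_pos, (monic_rPoly a hb).natDegree_map, natDegree_rPoly a hb]
    exact hb
  have hone : ((rPoly a b).map (algebraMap ℤ ℝ)).eval 1 < 0 := by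
    rw [eval_map_algebraMap, aeval_rPoly_one a hb]
    exact_mod_cast ha
  obtain ⟨t, ht, hroot⟩ :=
    exists_isRoot_gt_of_eval_neg hdeg (hq.leadingCoeff ▸ zero_le_one) hone
  rw [IsRoot, eval_map_algebraMap] at hroot
  exact ⟨t, ht, hroot⟩

lemma exists_circle_roots_rPoly (ha : a ≠ 2) :
    ∃ s : Finset ℂ, s.card = 2 * m - 2 ∧
      ∀ z ∈ s, ‖z‖ = 1 ∧ aeval z (rPoly a (2 * m)) = 0 := by
  rcases Nat.eq_zero_or_pos m with rfl | hm
  · exact ⟨∅, rfl, by simp⟩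
  set q := (rPoly a (2 * m)).map (algebraMap ℤ ℝ)
  have hq_deg : q.natDegree ≤ 2 * m := natDegree_map_le.trans (natDegree_rPoly a (by omega)).le
  have hq_refl : q.reflect (2 * m) = q := by rw [reflect_map, reflect_rPoly a (by omega)]
  set θ : ℕ → ℝ := fun k => Real.pi * k / m
  have hθ_mono : Monotone θ := fun k l hkl => by dsimp [θ]; gcongr
  have hθ_two_mul : θ (2 * m) = 2 * Real.pi := by
    have : (m : ℝ) ≠ 0 := by positivity
    simp [θ]
    field_simp
  have hzero : ∀ k ∈ Finset.Ico 1 (2 * m - 1),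
      ∃ ξ ∈ Ioo (θ k) (θ (k + 1)), trigForm q m ξ = 0 := by
    intro k hk
    rw [Finset.mem_Ico] at hk
    refine exists_mem_Ioo_eq_zero_of_mul_neg (hθ_mono k.le_succ)
      (continuous_trigForm q m).continuousOn ?_
    have hval : (-1 : ℝ) ^ k * (2 - a) ≠ 0 :=
      mul_ne_zero (by simp) (sub_ne_zero.mpr (by exact_mod_cast ha.symm))
    rw [trigForm_rPoly a (by omega) (by omega), trigForm_rPoly a (by omega) (by omega), pow_succ]
    nlinarith [sq_pos_of_ne_zero hval]
  choose! ξ hξ hξ_zero using hzero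
  have hξ_mono : StrictMonoOn ξ (Finset.Ico 1 (2 * m - 1) : Set ℕ) := fun k hk l hl hkl =>
    ((hξ k hk).2.trans_le (hθ_mono hkl)).trans (hξ l hl).1
  have hξ_mem : MapsTo ξ (Finset.Ico 1 (2 * m - 1) : Set ℕ) (Ico 0 (2 * Real.pi)) := by
    intro k hk
    have hk' := Finset.mem_Ico.mp hk
    refine ⟨(by positivity : 0 ≤ θ k).trans (hξ k hk).1.le, ?_⟩
    exact hθ_two_mul ▸ (hξ k hk).2.trans_le (hθ_mono (by omega))
  refine ⟨(Finset.Ico 1 (2 * m - 1)).image fun k => exp (ξ k * I), ?_, ?_⟩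
  · rw [Finset.card_image_of_injOn (f := fun k => exp (ξ k * I))
      (injOn_exp_mul_I.comp hξ_mono.injOn hξ_mem), Nat.card_Ico]
    omega
  · simp only [Finset.mem_image]
    rintro _ ⟨k, hk, rfl⟩
    refine ⟨norm_exp_ofReal_mul_I _, ?_⟩
    have := ofReal_trigForm hq_deg hq_refl (ξ k)
    rw [hξ_zero k hk, ofReal_zero, eq_comm, div_eq_zero_iff, aeval_map_algebraMap] at this
    exact this.resolve_right (pow_ne_zero _ (exp_ne_zero _))

lemma roots_map_rPoly (hb : 0 < b) (hbeven : Even b) (ha : 2 + a * (b - 1 : ℤ) < 0) :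
    ∃ t : ℝ, 1 < t ∧ ∃ s : Finset ℂ, (∀ z ∈ s, ‖z‖ = 1) ∧
      ((rPoly a b).map (Int.castRingHom ℂ)).roots =
        (insert (t : ℂ) (insert (t : ℂ)⁻¹ s)).val := by
  obtain ⟨m, rfl⟩ := hbeven.two_dvd
  have ha2 : a ≠ 2 := by rintro rfl; omega
  have hroot : ∀ z, ((rPoly a (2 * m)).map (Int.castRingHom ℂ)).IsRoot z ↔
      aeval z (rPoly a (2 * m)) = 0 := by
    simp [← algebraMap_int_eq, eval_map_algebraMap]
  obtain ⟨t, ht, ht_root⟩ := exists_root_gt_one_rPoly a hb ha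
  obtain ⟨s, hs_card, hs⟩ := exists_circle_roots_rPoly a ha2 (m := m)
  have ht0 : (t : ℂ) ≠ 0 := by exact_mod_cast (zero_lt_one.trans ht).ne'
  have hnorm : ‖(t : ℂ)‖ = t := by simp [(zero_lt_one.trans ht).le]
  have hinv_lt : t⁻¹ < 1 := inv_lt_one_of_one_lt₀ ht
  have hroot_t : aeval (t : ℂ) (rPoly a (2 * m)) = 0 := by
    simpa [ht_root] using aeval_algebraMap_apply ℂ t (rPoly a (2 * m))
  refine ⟨t, ht, s, fun z hz => (hs z hz).1, roots_eq_val_of_natDegree_le_card ?_ ?_ ?_⟩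
  · exact ((monic_rPoly a hb).map _).ne_zero
  · simp only [Finset.mem_insert, hroot]
    rintro z (rfl | rfl | hz)
    · exact hroot_t
    · have := aeval_inv_mul_pow_of_reflect_eq (natDegree_rPoly a hb).le (reflect_rPoly a hb) ht0
      rw [hroot_t] at this
      exact (mul_eq_zero.mp this).resolve_right (pow_ne_zero _ ht0)
    · exact (hs z hz).2
  · rw [(monic_rPoly a hb).natDegree_map, natDegree_rPoly a hb, Finset.card_insert_of_notMem,
      Finset.card_insert_of_notMem, hs_card]
    · omega
    · intro h
      have := (hs _ h).1
      rw [norm_inv, hnorm] at this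
      linarith
    · simp only [Finset.mem_insert, not_or]
      constructor
      · intro h
        have := congrArg norm h
        rw [norm_inv, hnorm] at this
        linarith
      · intro h
        have := (hs _ h).1
        rw [hnorm] at this
        linarith

end rPoly

theorem stmt_8 (a : ℤ) (b : ℕ) (hbpos : 0 < b) (hbeven : Even b)
    (ha : 2 + a * (b - 1 : ℤ) < 0) :
    (rPoly a b).Monic ∧
    (∀ i ≤ (rPoly a b).natDegree,
      (rPoly a b).coeff i = (rPoly a b).coeff ((rPoly a b).natDegree - i)) ∧
    ∃ lam : ℂ,
      1 < ‖lam‖ ∧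
      ((rPoly a b).map (Int.castRingHom ℂ)).IsRoot lam ∧
      ((rPoly a b).map (Int.castRingHom ℂ)).rootMultiplicity lam = 1 ∧
      lam.im = 0 ∧
      ∃ mu : ℂ,
        ‖mu‖ < 1 ∧
        ((rPoly a b).map (Int.castRingHom ℂ)).IsRoot mu ∧
        ∀ z : ℂ, ((rPoly a b).map (Int.castRingHom ℂ)).IsRoot z →
          z = lam ∨ z = mu ∨ ‖z‖ = 1 := by
  obtain ⟨t, ht, s, hs, hroots⟩ := roots_map_rPoly a hbpos hbeven ha
  have hP : (rPoly a b).map (Int.castRingHom ℂ) ≠ 0 := ((monic_rPoly a hbpos).map _).ne_zero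
  have hmem : ∀ z, ((rPoly a b).map (Int.castRingHom ℂ)).IsRoot z ↔
      z = t ∨ z = (t : ℂ)⁻¹ ∨ z ∈ s := by
    intro z
    rw [← mem_roots hP, hroots, Finset.mem_val, Finset.mem_insert, Finset.mem_insert]
  have hnorm : ‖(t : ℂ)‖ = t := by simp [(zero_lt_one.trans ht).le]
  refine ⟨monic_rPoly a hbpos, fun i hi => ?_, t, by rwa [hnorm], (hmem _).mpr (Or.inl rfl), ?_,
    ofReal_im t, (t : ℂ)⁻¹, ?_, (hmem _).mpr (Or.inr (Or.inl rfl)), fun z hz => ?_⟩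
  · rw [natDegree_rPoly a hbpos] at hi ⊢
    exact (coeff_sub_of_reflect_eq (reflect_rPoly a hbpos) hi).symm
  · rw [← count_roots, hroots]
    exact Multiset.count_eq_one_of_mem (Finset.nodup _) (Finset.mem_insert_self _ _)
  · rw [norm_inv, hnorm]
    exact inv_lt_one_of_one_lt₀ ht
  · rcases (hmem z).mp hz with h | h | h
    exacts [Or.inl h, Or.inr (Or.inl h), Or.inr (Or.inr (hs z h))]
end

section
/- Let a ∈ ℤ with |a - 1| ≥ 2 and b ∈ ℕ, b ≥ 2. If η is a root of unity of order n > 2 with r_{a,b}(η) = 0 and n does not divide b - 1, then |a - 1| ≤ 2, i.e., |a-1| = 2. -/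
/-!
Multiplying by `X - 1`, a root `ξ` of `r_{a,b}` satisfies
`ξ^(b+1) - 1 = (1 - a) ξ (ξ^(b-1) - 1)`. The primitive `n`-th roots of unity are conjugate
(they share the minimal polynomial `Φ_n`), so each of them is a root. As `n ∤ b - 1`, `η^(b-1)`
has some order `d ≥ 2`, and `ξ` can be chosen among the conjugates so that `ξ^(b-1)` is the
primitive `d`-th root `e^(2πik/d)` with `k/d ∈ [1/6, 5/6]`, whence `|ξ^(b-1) - 1| ≥ 1`.
Then `|a - 1| ≤ |ξ^(b+1) - 1| ≤ 2`.
-/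

open Polynomial Real

lemma Nat.exists_coprime_mul_six_mem_Icc {d : ℕ} (hd : 2 ≤ d) :
    ∃ k, k.Coprime d ∧ d ≤ 6 * k ∧ 6 * k ≤ 5 * d := by
  -- `d = e + 2 * k` with `e ∈ {0, 1, 2, 4}` and `k` odd when `e` is even
  have shift {k e : ℕ} (he : k.Coprime e) (hde : d = e + 2 * k) : k.Coprime d :=
    hde ▸ (Nat.coprime_add_mul_right_right k e 2).mpr he
  obtain h | h | h : d % 2 = 1 ∨ d % 4 = 0 ∨ d % 4 = 2 := by omega
  · exact ⟨d / 2, shift (Nat.coprime_one_right _) (by omega), by omega, by omega⟩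
  · exact ⟨d / 2 - 1, shift (Nat.coprime_two_right.mpr (Nat.odd_iff.mpr (by omega))) (by omega),
      by omega, by omega⟩
  · obtain rfl | hd6 : d = 2 ∨ 6 ≤ d := by omega
    · exact ⟨1, shift (Nat.coprime_one_left 0) rfl, by omega, by omega⟩
    · refine ⟨d / 2 - 2, shift (e := 2 ^ 2) ?_ (by omega), by omega, by omega⟩
      exact (Nat.coprime_two_right.mpr (Nat.odd_iff.mpr (by omega))).pow_right 2

lemma Real.half_le_sin_of_mem_Icc {x : ℝ} (h₁ : π / 6 ≤ x) (h₂ : x ≤ 5 * π / 6) :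
    1 / 2 ≤ Real.sin x := by
  wlog hx : x ≤ π / 2 generalizing x
  · rw [← Real.sin_pi_sub]
    exact this (by linarith) (by linarith) (by linarith)
  rw [← Real.sin_pi_div_six]
  exact Real.sin_le_sin_of_le_of_le_pi_div_two (by linarith [Real.pi_pos]) hx h₁

lemma Complex.exists_isPrimitiveRoot_one_le_norm_sub_one {d : ℕ} (hd : 2 ≤ d) :
    ∃ ζ : ℂ, IsPrimitiveRoot ζ d ∧ 1 ≤ ‖ζ - 1‖ := by
  obtain ⟨k, hk, hlo, hhi⟩ := Nat.exists_coprime_mul_six_mem_Icc hd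
  refine ⟨_, Complex.isPrimitiveRoot_exp_of_coprime k d (by omega) hk, ?_⟩
  have hd₀ : (0 : ℝ) < d := by positivity
  have hlo' : (d : ℝ) ≤ 6 * k := by exact_mod_cast hlo
  have hhi' : 6 * (k : ℝ) ≤ 5 * d := by exact_mod_cast hhi
  have hsin : 1 / 2 ≤ Real.sin (π * k / d) := by
    apply Real.half_le_sin_of_mem_Icc
    · rw [le_div_iff₀ hd₀]; nlinarith [Real.pi_pos]
    · rw [div_le_iff₀ hd₀]; nlinarith [Real.pi_pos]
  rw [show 2 * π * Complex.I * (k / d) = Complex.I * ((2 * π * k / d : ℝ) : ℂ) by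
      push_cast; ring,
    Complex.norm_exp_I_mul_ofReal_sub_one, norm_mul, Real.norm_two, Real.norm_eq_abs,
    show 2 * π * k / d / 2 = π * k / d by ring, abs_of_nonneg (by linarith)]
  linarith

lemma Nat.exists_coprime_modEq_of_dvd {d n m : ℕ} [NeZero n] (hdn : d ∣ n) (hm : m.Coprime d) :
    ∃ j, j.Coprime n ∧ j ≡ m [MOD d] := by
  obtain ⟨v, hv⟩ := ZMod.unitsMap_surjective hdn (ZMod.unitOfCoprime m hm)
  refine ⟨(v : ZMod n).val, ZMod.val_coe_unit_coprime v,
    (ZMod.natCast_eq_natCast_iff _ _ _).mp ?_⟩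
  rw [ZMod.natCast_val, ← ZMod.unitsMap_val hdn, hv, ZMod.coe_unitOfCoprime]

lemma IsPrimitiveRoot.exists_isPrimitiveRoot_pow_eq {R : Type*} [CommRing R] [IsDomain R]
    {η : R} {n c : ℕ} [NeZero n] (hη : IsPrimitiveRoot η n) {ζ : R}
    (hζ : IsPrimitiveRoot ζ (orderOf (η ^ c))) :
    ∃ ξ, IsPrimitiveRoot ξ n ∧ ξ ^ c = ζ := by
  have hdn : orderOf (η ^ c) ∣ n :=
    orderOf_dvd_of_pow_eq_one (by rw [← pow_mul, mul_comm, pow_mul, hη.pow_eq_one, one_pow])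
  have : NeZero (orderOf (η ^ c)) :=
    ⟨fun h ↦ NeZero.ne n (Nat.eq_zero_of_zero_dvd (h ▸ hdn))⟩
  obtain ⟨m, -, hm, rfl⟩ := (IsPrimitiveRoot.orderOf (η ^ c)).isPrimitiveRoot_iff.mp hζ
  obtain ⟨j, hj, hjm⟩ := Nat.exists_coprime_modEq_of_dvd hdn hm
  refine ⟨η ^ j, hη.pow_of_coprime j hj, ?_⟩
  rw [← pow_mul, mul_comm, pow_mul, ← pow_mod_orderOf, hjm, pow_mod_orderOf]

lemma IsPrimitiveRoot.exists_one_le_norm_pow_sub_one {η : ℂ} {n c : ℕ} [NeZero n]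
    (hη : IsPrimitiveRoot η n) (hc : ¬ n ∣ c) :
    ∃ ξ : ℂ, IsPrimitiveRoot ξ n ∧ 1 ≤ ‖ξ ^ c - 1‖ := by
  have hd : 2 ≤ orderOf (η ^ c) := by
    have hpos : 0 < orderOf (η ^ c) :=
      (hη.isOfFinOrder (NeZero.ne n)).pow.orderOf_pos
    have hne : orderOf (η ^ c) ≠ 1 := by
      rwa [Ne, orderOf_eq_one_iff, hη.pow_eq_one_iff_dvd]
    omega
  obtain ⟨ζ, hζ, hfar⟩ := Complex.exists_isPrimitiveRoot_one_le_norm_sub_one hd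
  obtain ⟨ξ, hξ, rfl⟩ := hη.exists_isPrimitiveRoot_pow_eq hζ
  exact ⟨ξ, hξ, hfar⟩

lemma IsPrimitiveRoot.aeval_eq_zero_of_aeval_eq_zero {K : Type*} [Field K] [CharZero K] {n : ℕ}
    (hn : 0 < n) {η ξ : K} (hη : IsPrimitiveRoot η n) (hξ : IsPrimitiveRoot ξ n) {p : ℤ[X]}
    (hp : aeval η p = 0) : aeval ξ p = 0 := by
  have hmin : minpoly ℤ η = minpoly ℤ ξ := by
    rw [← cyclotomic_eq_minpoly hη hn, cyclotomic_eq_minpoly hξ hn]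
  obtain ⟨q, rfl⟩ := hmin ▸ minpoly.isIntegrallyClosed_dvd (hη.isIntegral hn) hp
  rw [map_mul, minpoly.aeval, zero_mul]

lemma X_sub_one_mul_rPoly (a : ℤ) (c : ℕ) :
    (X - 1) * rPoly a (c + 1) = X ^ (c + 2) - 1 - C (1 - a) * X * (X ^ c - 1) := by
  have hgeom := geom_sum_Ico_mul (X : ℤ[X]) (Nat.le_add_left 1 c)
  simp only [rPoly, C_sub, C_1]
  linear_combination C a * hgeom

lemma pow_add_two_sub_one_of_aeval_rPoly_eq_zero {R : Type*} [CommRing R] {a : ℤ} {c : ℕ}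
    {ξ : R}
    (h : aeval ξ (rPoly a (c + 1)) = 0) :
    ξ ^ (c + 2) - 1 = ((1 - a : ℤ) : R) * ξ * (ξ ^ c - 1) := by
  have := congrArg (aeval ξ) (X_sub_one_mul_rPoly a c)
  simp only [map_mul, map_sub, map_pow, map_one, aeval_X, eq_intCast, map_intCast, h,
    mul_zero] at this
  push_cast at this ⊢
  linear_combination -this

lemma abs_sub_one_le_two_of_aeval_rPoly_eq_zero {a : ℤ} {c : ℕ} {ξ : ℂ} (hξ : ‖ξ‖ = 1)
    (hroot : aeval ξ (rPoly a (c + 1)) = 0) (hfar : 1 ≤ ‖ξ ^ c - 1‖) : |a - 1| ≤ 2 := by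
  have hkey : (|a - 1| : ℝ) * ‖ξ ^ c - 1‖ = ‖ξ ^ (c + 2) - 1‖ := by
    rw [pow_add_two_sub_one_of_aeval_rPoly_eq_zero hroot, norm_mul, norm_mul, hξ,
      Complex.norm_intCast, abs_sub_comm]
    push_cast; ring
  have hle : ‖ξ ^ (c + 2) - 1‖ ≤ 2 := by
    refine (norm_sub_le _ _).trans ?_
    rw [norm_pow, hξ, one_pow, norm_one]; norm_num
  have : (|a - 1| : ℝ) ≤ 2 := by nlinarith [abs_nonneg ((a : ℝ) - 1)]
  exact_mod_cast this

theorem stmt_12_general (a : ℤ) (ha : 2 ≤ |a - 1|) (b : ℕ)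
    (η : ℂ) (n : ℕ) (hn : 2 < n)
    (hord : η ^ n = 1 ∧ ∀ m : ℕ, 0 < m → m < n → η ^ m ≠ 1)
    (hroot : ((rPoly a b).map (Int.castRingHom ℂ)).IsRoot η)
    (hndvd : ¬ (n ∣ b - 1)) :
    |a - 1| = 2 := by
  obtain ⟨c, rfl⟩ : ∃ c, b = c + 1 :=
    Nat.exists_eq_succ_of_ne_zero (by rintro rfl; exact hndvd (dvd_zero n))
  have : NeZero n := ⟨by omega⟩
  have hη : IsPrimitiveRoot η n := (IsPrimitiveRoot.iff (by omega)).mpr hord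
  obtain ⟨ξ, hξ, hfar⟩ := hη.exists_one_le_norm_pow_sub_one hndvd
  have hrootη : aeval η (rPoly a (c + 1)) = 0 := by
    rwa [aeval_def, algebraMap_int_eq, ← eval_map]
  exact le_antisymm (abs_sub_one_le_two_of_aeval_rPoly_eq_zero (hξ.norm'_eq_one (by omega))
    (hη.aeval_eq_zero_of_aeval_eq_zero (by omega) hξ hrootη) hfar) ha

theorem stmt_12 (a : ℤ) (ha : 2 ≤ |a - 1|) (b : ℕ) (hb : 2 ≤ b)
    (η : ℂ) (n : ℕ) (hn : 2 < n)
    (hord : η ^ n = 1 ∧ ∀ m : ℕ, 0 < m → m < n → η ^ m ≠ 1)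
    (hroot : ((rPoly a b).map (Int.castRingHom ℂ)).IsRoot η)
    (hndvd : ¬ (n ∣ b - 1)) :
    |a - 1| = 2 :=
  stmt_12_general a ha b η n hn hord hroot hndvd
end

section
/- For a = -1 and b ≡ 2 (mod 6), the polynomial X² - X + 1 divides r_{-1,b}(X) = 1 - X - X² - ... - X^{b-1} + X^b in ℤ[X]. -/
open Polynomial

lemma rPoly_step (n : ℕ) :
    rPoly (-1) (n + 6 + 2) =
      rPoly (-1) (n + 2) +
        X ^ (n + 2) * ((X ^ 2 - X + 1) * ((X + 1) * (X ^ 3 - X ^ 2 - X - 2))) := by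
  unfold rPoly
  have h : Finset.Ico 1 (n + 6 + 2) = Finset.Ico 1 (n + 2) ∪ Finset.Ico (n + 2) (n + 8) := by
    rw [Finset.Ico_union_Ico_eq_Ico] <;> omega
  rw [h, Finset.sum_union (by
    apply Finset.Ico_disjoint_Ico_consecutive)]
  have h2 : ∑ i ∈ Finset.Ico (n + 2) (n + 8), (X : Polynomial ℤ) ^ i
      = X ^ (n + 2) * ∑ i ∈ Finset.range 6, X ^ i := by
    rw [Finset.sum_Ico_eq_sum_range, Finset.mul_sum]
    have : n + 8 - (n + 2) = 6 := by omega
    rw [this]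
    apply Finset.sum_congr rfl
    intro i _
    rw [← pow_add]
  rw [h2]
  simp only [Finset.sum_range_succ, Finset.sum_range_zero]
  have hx : (X : Polynomial ℤ) ^ (n + 6 + 2) = X ^ (n + 2) * X ^ 6 := by
    rw [← pow_add]
  rw [hx]
  simp only [map_neg, map_one]
  ring

theorem stmt_13 (b : ℕ) (hb : b % 6 = 2) :
    (X ^ 2 - X + 1 : Polynomial ℤ) ∣ rPoly (-1) b := by
  obtain ⟨k, rfl⟩ : ∃ k, b = 6 * k + 2 := ⟨b / 6, by omega⟩
  induction k with
  | zero =>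
    refine ⟨1, ?_⟩
    unfold rPoly
    simp [Finset.sum_Ico_eq_sum_range]
    ring
  | succ k ih =>
    have h : 6 * (k + 1) + 2 = 6 * k + 6 + 2 := by ring
    rw [h, rPoly_step]
    exact dvd_add (ih (by omega)) ⟨X ^ (6 * k + 2) * ((X + 1) * (X ^ 3 - X ^ 2 - X - 2)), by ring⟩
end

section
/- Let Φ(z) = (z - i)/(z + i) be the Cayley transform and for a polynomial f of degree n define C(f)(X) = (X + i)^n f(Φ(X)). If f ∈ ℝ[X] is reciprocal of degree n (X^n f(1/X) = f(X)), then C(f) has real coefficients. -/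
open Polynomial Complex

theorem stmt_19 (f : Polynomial ℝ) (n : ℕ) (hn : f.natDegree = n)
    (hrec : ∀ i ≤ n, f.coeff i = f.coeff (n - i))
    (g : Polynomial ℂ)
    (hg : ∀ z : ℂ, z ≠ -I →
      g.eval z = (z + I) ^ n * (f.map (algebraMap ℝ ℂ)).eval ((z - I) / (z + I))) :
    ∀ k : ℕ, (g.coeff k).im = 0 := by
  have hrev : f.reverse = f := by
    ext i
    rw [coeff_reverse]
    rcases le_or_gt i n with h | h
    · rw [hn, revAt_le h, ← hrec i h]
    · rw [hn, revAt_eq_self_of_lt h]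
  set φ := algebraMap ℝ ℂ with hφ
  have hcomp : (starRingEnd ℂ).comp φ = φ := by
    ext r; simp [hφ, Complex.conj_ofReal]
  have hconj : ∀ w : ℂ, (starRingEnd ℂ) ((f.map φ).eval w)
      = (f.map φ).eval ((starRingEnd ℂ) w) := by
    intro w
    rw [eval_map, eval_map, hom_eval₂, hcomp]
  have hrecip : ∀ w : ℂ, w ≠ 0 →
      (f.map φ).eval w⁻¹ * w ^ n = (f.map φ).eval w := by
    intro w hw
    have := invertibleOfNonzero hw
    have h := eval₂_reverse_mul_pow φ w f
    rw [hrev, hn, invOf_eq_inv] at h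
    rw [eval_map, eval_map]
    exact h
  have h1 : ∀ w : ℂ, (g.map (starRingEnd ℂ)).eval ((starRingEnd ℂ) w)
      = (starRingEnd ℂ) (g.eval w) := by
    intro w; rw [← eval₂_eq_eval_map, eval₂_at_apply]
  have hkey : g.map (starRingEnd ℂ) = g := by
    apply Polynomial.eq_of_infinite_eval_eq
    have hfin : ({I, -I} : Set ℂ).Finite := (Set.finite_singleton (-I)).insert I
    apply Set.Infinite.mono _ hfin.infinite_compl
    intro z hz
    simp only [Set.mem_compl_iff, Set.mem_insert_iff, Set.mem_singleton_iff, not_or] at hz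
    obtain ⟨hzI, hznI⟩ := hz
    have hc : (starRingEnd ℂ) z ≠ -I := by
      intro h
      apply hzI
      have := congrArg (starRingEnd ℂ) h
      simpa using this
    have h2 : (g.map (starRingEnd ℂ)).eval z
        = (starRingEnd ℂ) (g.eval ((starRingEnd ℂ) z)) := by
      rw [← h1, Complex.conj_conj]
    rw [Set.mem_setOf_eq, h2, hg _ hc, hg z hznI]
    simp only [map_mul, map_pow, map_add, map_sub, map_div₀, Complex.conj_conj,
      Complex.conj_I, hconj]
    -- (z - I)^n * f((z+I)/(z-I)) = (z+I)^n * f((z-I)/(z+I))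
    have hzI' : z - I ≠ 0 := sub_ne_zero.mpr hzI
    have hznI' : z + I ≠ 0 := by
      intro h; apply hznI; linear_combination h
    have hw : (z - I) / (z + I) ≠ 0 := div_ne_zero hzI' hznI'
    rw [← hrecip _ hw, inv_div]
    rw [div_pow]
    field_simp
    ring_nf
  intro k
  have := congrArg (fun p => Polynomial.coeff p k) hkey
  simp only [coeff_map] at this
  exact (Complex.conj_eq_iff_im.mp this)
end
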